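/- arXiv:2409.09297 — 8 statements merged into one kernel-verified Lean document; each statement's English description precedes it below -/
import Mathlib

section
/- For the binary case (T = 1, t = 0): if Pr(Y=1|D=1) > 0 and Pr(Y=1|D=0) > 0, then the probability of causation PC = Pr(Y(0)=0, Y(1)=1)/Pr(Y(1)=1) satisfies 1 − 1/RR ≤ PC ≤ Pr(Y=0|D=0)/Pr(Y=1|D=1), where RR = Pr(Y=1|D=1)/Pr(Y=1|D=0), and under no-confounding Pr(Y=y|D=d) = Pr(Y(d)=y). -/
theorem stmt3_general (y00 y01 y10 y11 p0 p1 : ℝ)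
    (h00 : 0 ≤ y00) (h10 : 0 ≤ y10)
    (hsum : y00 + y01 + y10 + y11 = 1)
    -- no confounding: Pr(Y=1|D=0) = Pr(Y(0)=1), Pr(Y=1|D=1) = Pr(Y(1)=1)
    (hp0 : p0 = y10 + y11) (hp1 : p1 = y01 + y11)
    (hp1pos : 0 < p1) :
    1 - 1 / (p1 / p0) ≤ y01 / p1 ∧ y01 / p1 ≤ (1 - p0) / p1 := by
  -- `p1 - p0 = y01 - y10` and `1 - p0 = y00 + y01`
  have hlower : p1 - p0 ≤ y01 := by linarith
  have hupper : y01 ≤ 1 - p0 := by linarith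
  rw [one_div_div, one_sub_div hp1pos.ne']
  exact ⟨div_le_div_of_nonneg_right hlower hp1pos.le,
    div_le_div_of_nonneg_right hupper hp1pos.le⟩

/-- Binary-outcome bounds (Dawid et al. 2016): under no confounding
(`Pr(Y=y|D=d) = Pr(Y(d)=y)`), `1 − 1/RR ≤ PC ≤ Pr(Y=0|D=0)/Pr(Y=1|D=1)`,
where `y_pq = Pr(Y(0)=p, Y(1)=q)`, `PC = y₀₁ / Pr(Y(1)=1)`, and
`RR = Pr(Y=1|D=1)/Pr(Y=1|D=0)`. -/
theorem stmt3 (y00 y01 y10 y11 p0 p1 : ℝ)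
    (h00 : 0 ≤ y00) (h01 : 0 ≤ y01) (h10 : 0 ≤ y10) (h11 : 0 ≤ y11)
    (hsum : y00 + y01 + y10 + y11 = 1)
    -- no confounding: Pr(Y=1|D=0) = Pr(Y(0)=1), Pr(Y=1|D=1) = Pr(Y(1)=1)
    (hp0 : p0 = y10 + y11) (hp1 : p1 = y01 + y11)
    (hp0pos : 0 < p0) (hp1pos : 0 < p1) :
    1 - 1 / (p1 / p0) ≤ y01 / p1 ∧ y01 / p1 ≤ (1 - p0) / p1 :=
  stmt3_general y00 y01 y10 y11 p0 p1 h00 h10 hsum hp0 hp1 hp1pos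
end

section
/- Let m_{pq} ≥ 0 (p,q ∈ {0,1}) with Σ m_{pq} = 1 and marginals m_{p+}, m_{+q}. Let y*_{lk} ≥ 0 (l,k ∈ {0,...,T}) with Σ y*_{lk} = 1 and marginals y*_{l+}, y*_{+k}. Set B = Σ_{l>t} y*_{l+} − Σ_{k>t} y*_{+k} and c = m_{+0} − m_{0+}. Then the mediation numerator N_M = (Σ_{k>t} Σ_{l≤t} y*_{lk})·m_{01} + (Σ_{k>t} Σ_{l≤t} y*_{kl})·m_{10} satisfies N_M ≥ max(0, c·B). -/
/-- Lower bound of Theorem 2: in complete mediation with a binary mediator and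
ordinal outcome, the mediation numerator
`N_M = (Σ_{k>t} Σ_{l≤t} y*_{lk})·m₀₁ + (Σ_{k>t} Σ_{l≤t} y*_{kl})·m₁₀`
satisfies `N_M ≥ max(0, c·B)`, where `B = Σ_{l>t} y*_{l+} − Σ_{k>t} y*_{+k}`
and `c = m_{+0} − m_{0+}`. -/
theorem stmt5 (T t : ℕ) (m00 m01 m10 m11 : ℝ) (ystar : ℕ → ℕ → ℝ)
    (hm00 : 0 ≤ m00) (hm01 : 0 ≤ m01) (hm10 : 0 ≤ m10) (hm11 : 0 ≤ m11)
    (hmsum : m00 + m01 + m10 + m11 = 1)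
    (hynn : ∀ l k, 0 ≤ ystar l k)
    (hysum : ∑ l ∈ Finset.range (T + 1), ∑ k ∈ Finset.range (T + 1), ystar l k = 1) :
    (∑ k ∈ (Finset.range (T + 1)).filter (fun k => t < k),
        ∑ l ∈ (Finset.range (T + 1)).filter (fun l => l ≤ t), ystar l k) * m01
      + (∑ k ∈ (Finset.range (T + 1)).filter (fun k => t < k),
        ∑ l ∈ (Finset.range (T + 1)).filter (fun l => l ≤ t), ystar k l) * m10
    ≥ max 0
        (((m00 + m10) - (m00 + m01)) *
          ((∑ l ∈ (Finset.range (T + 1)).filter (fun l => t < l),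
              ∑ k ∈ Finset.range (T + 1), ystar l k)
            - (∑ k ∈ (Finset.range (T + 1)).filter (fun k => t < k),
              ∑ l ∈ Finset.range (T + 1), ystar l k))) := by
  set R := Finset.range (T + 1)
  set P := ∑ k ∈ R.filter (fun k => t < k), ∑ l ∈ R.filter (fun l => l ≤ t), ystar l k with hP
  set Q := ∑ k ∈ R.filter (fun k => t < k), ∑ l ∈ R.filter (fun l => l ≤ t), ystar k l with hQ
  have hPnn : 0 ≤ P := Finset.sum_nonneg fun k _ => Finset.sum_nonneg fun l _ => hynn l k
  have hQnn : 0 ≤ Q := Finset.sum_nonneg fun k _ => Finset.sum_nonneg fun l _ => hynn k l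
  have hB : (∑ l ∈ R.filter (fun l => t < l), ∑ k ∈ R, ystar l k)
      - (∑ k ∈ R.filter (fun k => t < k), ∑ l ∈ R, ystar l k) = Q - P := by
    have h1 : ∀ l, ∑ k ∈ R, ystar l k
        = ∑ k ∈ R.filter (fun k => k ≤ t), ystar l k
          + ∑ k ∈ R.filter (fun k => ¬ k ≤ t), ystar l k :=
      fun l => (Finset.sum_filter_add_sum_filter_not R _ _).symm
    have h2 : ∀ k, ∑ l ∈ R, ystar l k
        = ∑ l ∈ R.filter (fun l => l ≤ t), ystar l k
          + ∑ l ∈ R.filter (fun l => ¬ l ≤ t), ystar l k :=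
      fun k => (Finset.sum_filter_add_sum_filter_not R _ _).symm
    simp only [Finset.sum_congr rfl fun l _ => h1 l, Finset.sum_congr rfl fun k _ => h2 k,
      Finset.sum_add_distrib]
    simp only [Nat.not_le]
    have hcomm : ∑ l ∈ R.filter (fun l => t < l), ∑ k ∈ R.filter (fun k => t < k), ystar l k
        = ∑ k ∈ R.filter (fun k => t < k), ∑ l ∈ R.filter (fun l => t < l), ystar l k :=
      Finset.sum_comm
    have hQ' : ∑ l ∈ R.filter (fun l => t < l), ∑ k ∈ R.filter (fun k => k ≤ t), ystar l k
        = Q := by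
      rw [hQ]
    rw [hcomm, hQ']; ring
  rw [hB]
  rw [ge_iff_le, max_le_iff]
  constructor
  · positivity
  · nlinarith [mul_nonneg hm01 hQnn, mul_nonneg hm10 hPnn]
end

section
/- In the complete mediation setting with b = min(m_{0+}, m_{+1}), c = m_{+0} − m_{0+}, C = min(Σ_{k>t} y*_{+k}, Σ_{l≤t} y*_{l+}), and B = Σ_{l>t} y*_{l+} − Σ_{k>t} y*_{+k}, the mediation numerator N_M = (Σ_{k>t} Σ_{l≤t} y*_{lk})·m_{01} + (Σ_{k>t} Σ_{l≤t} y*_{kl})·m_{10} satisfies N_M ≤ b·C + (b+c)·(C+B). -/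
/-- Upper bound of Theorem 2: in complete mediation with a binary mediator and
ordinal outcome, the mediation numerator satisfies
`N_M ≤ b·C + (b+c)·(C+B)` with `b = min(m_{0+}, m_{+1})`, `c = m_{+0} − m_{0+}`,
`C = min(Σ_{k>t} y*_{+k}, Σ_{l≤t} y*_{l+})`, `B = Σ_{l>t} y*_{l+} − Σ_{k>t} y*_{+k}`. -/
theorem stmt6 (T t : ℕ) (m00 m01 m10 m11 : ℝ) (ystar : ℕ → ℕ → ℝ)
    (hm00 : 0 ≤ m00) (hm01 : 0 ≤ m01) (hm10 : 0 ≤ m10) (hm11 : 0 ≤ m11)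
    (hmsum : m00 + m01 + m10 + m11 = 1)
    (hynn : ∀ l k, 0 ≤ ystar l k)
    (hysum : ∑ l ∈ Finset.range (T + 1), ∑ k ∈ Finset.range (T + 1), ystar l k = 1) :
    (∑ k ∈ (Finset.range (T + 1)).filter (fun k => t < k),
        ∑ l ∈ (Finset.range (T + 1)).filter (fun l => l ≤ t), ystar l k) * m01
      + (∑ k ∈ (Finset.range (T + 1)).filter (fun k => t < k),
        ∑ l ∈ (Finset.range (T + 1)).filter (fun l => l ≤ t), ystar k l) * m10
    ≤ min (m00 + m01) (m01 + m11) *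
        min (∑ k ∈ (Finset.range (T + 1)).filter (fun k => t < k),
              ∑ l ∈ Finset.range (T + 1), ystar l k)
            (∑ l ∈ (Finset.range (T + 1)).filter (fun l => l ≤ t),
              ∑ k ∈ Finset.range (T + 1), ystar l k)
      + (min (m00 + m01) (m01 + m11) + ((m00 + m10) - (m00 + m01))) *
        (min (∑ k ∈ (Finset.range (T + 1)).filter (fun k => t < k),
                ∑ l ∈ Finset.range (T + 1), ystar l k)
             (∑ l ∈ (Finset.range (T + 1)).filter (fun l => l ≤ t),
                ∑ k ∈ Finset.range (T + 1), ystar l k)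
          + ((∑ l ∈ (Finset.range (T + 1)).filter (fun l => t < l),
                ∑ k ∈ Finset.range (T + 1), ystar l k)
            - (∑ k ∈ (Finset.range (T + 1)).filter (fun k => t < k),
                ∑ l ∈ Finset.range (T + 1), ystar l k))) := by

  classical
  set R := Finset.range (T + 1) with hR
  set Pk := R.filter (fun k => t < k) with hPk
  set Pl := R.filter (fun l => l ≤ t) with hPl
  set S1 := ∑ k ∈ Pk, ∑ l ∈ Pl, ystar l k with hS1
  set S2 := ∑ k ∈ Pk, ∑ l ∈ Pl, ystar k l with hS2
  set A := ∑ k ∈ Pk, ∑ l ∈ R, ystar l k with hA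
  set D := ∑ l ∈ Pl, ∑ k ∈ R, ystar l k with hD
  set E := ∑ l ∈ Pk, ∑ k ∈ R, ystar l k with hE
  set b := min (m00 + m01) (m01 + m11) with hb
  have hsub : Pl ⊆ R := Finset.filter_subset _ _
  have hsubk : Pk ⊆ R := Finset.filter_subset _ _
  -- nonnegativity of sums
  have hS1nn : 0 ≤ S1 := Finset.sum_nonneg fun k _ => Finset.sum_nonneg fun l _ => hynn l k
  have hS2nn : 0 ≤ S2 := Finset.sum_nonneg fun k _ => Finset.sum_nonneg fun l _ => hynn k l
  have hAnn : 0 ≤ A := Finset.sum_nonneg fun k _ => Finset.sum_nonneg fun l _ => hynn l k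
  have hDnn : 0 ≤ D := Finset.sum_nonneg fun l _ => Finset.sum_nonneg fun k _ => hynn l k
  have hEnn : 0 ≤ E := Finset.sum_nonneg fun l _ => Finset.sum_nonneg fun k _ => hynn l k
  -- S1 ≤ A
  have hS1A : S1 ≤ A := by
    apply Finset.sum_le_sum
    intro k _
    exact Finset.sum_le_sum_of_subset_of_nonneg hsub (fun l _ _ => hynn l k)
  -- S1 ≤ D
  have hS1D : S1 ≤ D := by
    rw [hS1, Finset.sum_comm]
    apply Finset.sum_le_sum
    intro l _
    exact Finset.sum_le_sum_of_subset_of_nonneg hsubk (fun k _ _ => hynn l k)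
  -- S2 ≤ E
  have hS2E : S2 ≤ E := by
    apply Finset.sum_le_sum
    intro k _
    exact Finset.sum_le_sum_of_subset_of_nonneg hsub (fun l _ _ => hynn k l)
  -- D + E = 1
  have hDE : D + E = 1 := by
    rw [hD, hE, hPl, hPk]
    rw [← hysum]
    rw [← Finset.sum_filter_add_sum_filter_not R (fun l => l ≤ t)
      (fun l => ∑ k ∈ R, ystar l k)]
    congr 1
    apply Finset.sum_congr _ (fun _ _ => rfl)
    apply Finset.filter_congr
    intro x _
    simp [not_le]
  -- S2 + A ≤ 1
  have hS2A : S2 + A ≤ 1 := by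
    have hW : S2 ≤ ∑ a ∈ R, ∑ l ∈ Pl, ystar a l := by
      rw [hS2]
      exact Finset.sum_le_sum_of_subset_of_nonneg hsubk
        (fun k _ _ => Finset.sum_nonneg fun l _ => hynn k l)
    have hA' : A = ∑ a ∈ R, ∑ k ∈ Pk, ystar a k := by
      rw [hA, Finset.sum_comm]
    have hWA : (∑ a ∈ R, ∑ l ∈ Pl, ystar a l) + (∑ a ∈ R, ∑ k ∈ Pk, ystar a k) = 1 := by
      rw [← Finset.sum_add_distrib, ← hysum]
      apply Finset.sum_congr rfl
      intro a _
      rw [hPl, hPk]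
      rw [← Finset.sum_filter_add_sum_filter_not R (fun l => l ≤ t) (fun k => ystar a k)]
      congr 1
      apply Finset.sum_congr _ (fun _ _ => rfl)
      apply Finset.filter_congr
      intro x _
      simp [not_le]
    linarith [hW, hA'.le, hA'.ge]
  -- m facts
  have hm01b : m01 ≤ b := le_min (by linarith) (by linarith)
  have hbnn : 0 ≤ b := le_trans hm01 hm01b
  have hm10bc : m10 ≤ b + ((m00 + m10) - (m00 + m01)) := by
    have := hm01b; linarith
  -- S1 ≤ min A D
  have hS1C : S1 ≤ min A D := le_min hS1A hS1D
  have hCnn : 0 ≤ min A D := le_min hAnn hDnn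
  -- S2 ≤ min A D + (E - A)
  have hS2C : S2 ≤ min A D + (E - A) := by
    rcases le_total A D with h | h
    · rw [min_eq_left h]; linarith
    · rw [min_eq_right h]; linarith
  have hCBnn : 0 ≤ min A D + (E - A) := by
    rcases le_total A D with h | h
    · rw [min_eq_left h]; linarith
    · rw [min_eq_right h]; linarith
  have hbcnn : 0 ≤ b + ((m00 + m10) - (m00 + m01)) := le_trans hm10 hm10bc
  have h1 : S1 * m01 ≤ (min A D) * b := mul_le_mul hS1C hm01b hm01 hCnn
  have h2 : S2 * m10 ≤ (min A D + (E - A)) * (b + ((m00 + m10) - (m00 + m01))) :=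
    mul_le_mul hS2C hm10bc hm10 hCBnn
  nlinarith [h1, h2]
end

section
/- In the complete mediation setting, define the observed outcome distributions y_{+k} = m_{+0}·y*_{k+} + m_{+1}·y*_{+k} and y_{l+} = m_{0+}·y*_{l+} + m_{1+}·y*_{+l}. Then (m_{+0} − m_{0+})·(Σ_{l>t} y*_{l+} − Σ_{k>t} y*_{+k}) = Σ_{k>t} y_{+k} − Σ_{l>t} y_{l+}. -/
/-- Part of Theorem 3: with observed outcome distributions
`y_{+k} = m_{+0}·y*_{k+} + m_{+1}·y*_{+k}` and `y_{l+} = m_{0+}·y*_{l+} + m_{1+}·y*_{+l}`,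
one has `(m_{+0} − m_{0+})·(Σ_{l>t} y*_{l+} − Σ_{k>t} y*_{+k}) = Σ_{k>t} y_{+k} − Σ_{l>t} y_{l+}`,
so the mediation lower bound coincides with the simple lower bound. -/
theorem stmt7 (T t : ℕ) (m0p m1p mp0 mp1 : ℝ) (ystar : ℕ → ℕ → ℝ)
    (hmr : m0p + m1p = 1) (hmc : mp0 + mp1 = 1) :
    (mp0 - m0p) *
        ((∑ l ∈ (Finset.range (T + 1)).filter (fun l => t < l),
            ∑ k ∈ Finset.range (T + 1), ystar l k)
          - (∑ k ∈ (Finset.range (T + 1)).filter (fun k => t < k),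
            ∑ l ∈ Finset.range (T + 1), ystar l k))
      = (∑ k ∈ (Finset.range (T + 1)).filter (fun k => t < k),
            (mp0 * (∑ j ∈ Finset.range (T + 1), ystar k j)
              + mp1 * (∑ l ∈ Finset.range (T + 1), ystar l k)))
        - (∑ l ∈ (Finset.range (T + 1)).filter (fun l => t < l),
            (m0p * (∑ k ∈ Finset.range (T + 1), ystar l k)
              + m1p * (∑ j ∈ Finset.range (T + 1), ystar j l))) := by
  simp only [Finset.sum_add_distrib, ← Finset.mul_sum]
  have h1 : mp1 = 1 - mp0 := by linarith
  have h2 : m1p = 1 - m0p := by linarith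
  subst h1 h2
  ring
end

section
/- With b = min(m_{0+}, m_{+1}), c = m_{+0} − m_{0+}, C = min(Σ_{k>t} y*_{+k}, Σ_{l≤t} y*_{l+}), B = Σ_{l>t} y*_{l+} − Σ_{k>t} y*_{+k}, it holds that b·C + (b+c)·(C+B) ≤ m_{0+}·Σ_{l≤t} y*_{l+} + m_{1+}·Σ_{k≤t} y*_{+k}, where the right side equals Σ_{l≤t} y_{l+} for y_{l+} = m_{0+}·y*_{l+} + m_{1+}·y*_{+l}. Hence the mediation upper bound PCU_M is no larger than the simple upper bound PCU. -/
/-- Part of Theorem 3 (`PCU_M ≤ PCU`): with `b = min(m_{0+}, m_{+1})`,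
`c = m_{+0} − m_{0+}`, `C = min(Σ_{k>t} y*_{+k}, Σ_{l≤t} y*_{l+})` and
`B = Σ_{l>t} y*_{l+} − Σ_{k>t} y*_{+k}`, one has
`b·C + (b+c)·(C+B) ≤ m_{0+}·Σ_{l≤t} y*_{l+} + m_{1+}·Σ_{k≤t} y*_{+k} = Σ_{l≤t} y_{l+}`. -/
theorem stmt8 (T t : ℕ) (m0p m1p mp0 mp1 : ℝ)
    (hm0p : 0 ≤ m0p) (hm1p : 0 ≤ m1p) (hmp0 : 0 ≤ mp0) (hmp1 : 0 ≤ mp1)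
    (hmr : m0p + m1p = 1) (hmc : mp0 + mp1 = 1)
    (ystar : ℕ → ℕ → ℝ) (hynn : ∀ l k, 0 ≤ ystar l k)
    (hysum : ∑ l ∈ Finset.range (T + 1), ∑ k ∈ Finset.range (T + 1), ystar l k = 1) :
    min m0p mp1 *
        min (∑ k ∈ (Finset.range (T + 1)).filter (fun k => t < k),
              ∑ l ∈ Finset.range (T + 1), ystar l k)
            (∑ l ∈ (Finset.range (T + 1)).filter (fun l => l ≤ t),
              ∑ k ∈ Finset.range (T + 1), ystar l k)
      + (min m0p mp1 + (mp0 - m0p)) *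
        (min (∑ k ∈ (Finset.range (T + 1)).filter (fun k => t < k),
                ∑ l ∈ Finset.range (T + 1), ystar l k)
             (∑ l ∈ (Finset.range (T + 1)).filter (fun l => l ≤ t),
                ∑ k ∈ Finset.range (T + 1), ystar l k)
          + ((∑ l ∈ (Finset.range (T + 1)).filter (fun l => t < l),
                ∑ k ∈ Finset.range (T + 1), ystar l k)
            - (∑ k ∈ (Finset.range (T + 1)).filter (fun k => t < k),
                ∑ l ∈ Finset.range (T + 1), ystar l k)))
    ≤ m0p * (∑ l ∈ (Finset.range (T + 1)).filter (fun l => l ≤ t),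
              ∑ k ∈ Finset.range (T + 1), ystar l k)
      + m1p * (∑ k ∈ (Finset.range (T + 1)).filter (fun k => k ≤ t),
              ∑ l ∈ Finset.range (T + 1), ystar l k) := by
  set A := ∑ k ∈ (Finset.range (T + 1)).filter (fun k => t < k),
      ∑ l ∈ Finset.range (T + 1), ystar l k with hAdef
  set S := ∑ l ∈ (Finset.range (T + 1)).filter (fun l => l ≤ t),
      ∑ k ∈ Finset.range (T + 1), ystar l k with hSdef
  set S' := ∑ l ∈ (Finset.range (T + 1)).filter (fun l => t < l),
      ∑ k ∈ Finset.range (T + 1), ystar l k with hS'def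
  set A' := ∑ k ∈ (Finset.range (T + 1)).filter (fun k => k ≤ t),
      ∑ l ∈ Finset.range (T + 1), ystar l k with hA'def
  have hSS : S + S' = 1 := by
    rw [hSdef, hS'def]
    have h := Finset.sum_filter_add_sum_filter_not (Finset.range (T + 1))
      (fun l => l ≤ t) (fun l => ∑ k ∈ Finset.range (T + 1), ystar l k)
    simp only [not_le] at h
    rw [h, hysum]
  have hysum' : ∑ k ∈ Finset.range (T + 1), ∑ l ∈ Finset.range (T + 1), ystar l k = 1 := by
    rw [Finset.sum_comm, hysum]
  have hAA : A' + A = 1 := by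
    rw [hA'def, hAdef]
    have h := Finset.sum_filter_add_sum_filter_not (Finset.range (T + 1))
      (fun k => k ≤ t) (fun k => ∑ l ∈ Finset.range (T + 1), ystar l k)
    simp only [not_le] at h
    rw [h, hysum']
  have hS0 : 0 ≤ S := Finset.sum_nonneg fun l _ => Finset.sum_nonneg fun k _ => hynn l k
  have hS'0 : 0 ≤ S' := Finset.sum_nonneg fun l _ => Finset.sum_nonneg fun k _ => hynn l k
  have hA0 : 0 ≤ A := Finset.sum_nonneg fun k _ => Finset.sum_nonneg fun l _ => hynn l k
  have hA'0 : 0 ≤ A' := Finset.sum_nonneg fun k _ => Finset.sum_nonneg fun l _ => hynn l k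
  have hb0 : 0 ≤ min m0p mp1 := le_min hm0p hmp1
  have hb : min m0p mp1 ≤ m0p := min_le_left _ _
  have hbc0 : 0 ≤ min m0p mp1 + (mp0 - m0p) := by
    rcases le_total m0p mp1 with h | h
    · rw [min_eq_left h]; linarith
    · rw [min_eq_right h]; linarith
  have hbc : min m0p mp1 + (mp0 - m0p) ≤ m1p := by
    rcases le_total m0p mp1 with h | h
    · rw [min_eq_left h]; linarith
    · rw [min_eq_right h]; linarith
  have hC : min A S ≤ S := min_le_right _ _
  have hC0 : 0 ≤ min A S := le_min hA0 hS0
  have hCB : min A S + (S' - A) ≤ A' := by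
    rcases le_total A S with h | h
    · rw [min_eq_left h]; linarith
    · rw [min_eq_right h]; linarith
  have hCB0 : 0 ≤ min A S + (S' - A) := by
    rcases le_total A S with h | h
    · rw [min_eq_left h]; linarith
    · rw [min_eq_right h]; linarith
  exact add_le_add (mul_le_mul hb hC hC0 hm0p) (mul_le_mul hbc hCB hCB0 hm1p)
end

section
/- In the complete mediation setting, the mediation upper bound satisfies PCU_M = (bC + (b+c)(C+B)) / (Σ_{k>t} y_{+k}) ≤ 1, where y_{+k} = m_{+0}·y*_{k+} + m_{+1}·y*_{+k} and b, c, C, B are defined as in Theorem 2, provided Σ_{k>t} y_{+k} > 0. -/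
/-- The mediation upper bound never exceeds 1:
`(bC + (b+c)(C+B)) / (Σ_{k>t} y_{+k}) ≤ 1`, where
`y_{+k} = m_{+0}·y*_{k+} + m_{+1}·y*_{+k}`, provided `Σ_{k>t} y_{+k} > 0`. -/
theorem stmt11 (T t : ℕ) (m0p m1p mp0 mp1 : ℝ)
    (hm0p : 0 ≤ m0p) (hm1p : 0 ≤ m1p) (hmp0 : 0 ≤ mp0) (hmp1 : 0 ≤ mp1)
    (hmr : m0p + m1p = 1) (hmc : mp0 + mp1 = 1)
    (ystar : ℕ → ℕ → ℝ) (hynn : ∀ l k, 0 ≤ ystar l k)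
    (hysum : ∑ l ∈ Finset.range (T + 1), ∑ k ∈ Finset.range (T + 1), ystar l k = 1)
    (hden : 0 < ∑ k ∈ (Finset.range (T + 1)).filter (fun k => t < k),
        (mp0 * (∑ j ∈ Finset.range (T + 1), ystar k j)
          + mp1 * (∑ l ∈ Finset.range (T + 1), ystar l k))) :
    (min m0p mp1 *
        min (∑ k ∈ (Finset.range (T + 1)).filter (fun k => t < k),
              ∑ l ∈ Finset.range (T + 1), ystar l k)
            (∑ l ∈ (Finset.range (T + 1)).filter (fun l => l ≤ t),
              ∑ k ∈ Finset.range (T + 1), ystar l k)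
      + (min m0p mp1 + (mp0 - m0p)) *
        (min (∑ k ∈ (Finset.range (T + 1)).filter (fun k => t < k),
                ∑ l ∈ Finset.range (T + 1), ystar l k)
             (∑ l ∈ (Finset.range (T + 1)).filter (fun l => l ≤ t),
                ∑ k ∈ Finset.range (T + 1), ystar l k)
          + ((∑ l ∈ (Finset.range (T + 1)).filter (fun l => t < l),
                ∑ k ∈ Finset.range (T + 1), ystar l k)
            - (∑ k ∈ (Finset.range (T + 1)).filter (fun k => t < k),
                ∑ l ∈ Finset.range (T + 1), ystar l k))))
      / (∑ k ∈ (Finset.range (T + 1)).filter (fun k => t < k),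
          (mp0 * (∑ j ∈ Finset.range (T + 1), ystar k j)
            + mp1 * (∑ l ∈ Finset.range (T + 1), ystar l k)))
    ≤ 1 := by
  rw [div_le_one hden]
  set A := ∑ k ∈ (Finset.range (T + 1)).filter (fun k => t < k),
      ∑ l ∈ Finset.range (T + 1), ystar l k with hAdef
  set S := ∑ l ∈ (Finset.range (T + 1)).filter (fun l => l ≤ t),
      ∑ k ∈ Finset.range (T + 1), ystar l k with hSdef
  set R := ∑ l ∈ (Finset.range (T + 1)).filter (fun l => t < l),
      ∑ k ∈ Finset.range (T + 1), ystar l k with hRdef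
  have hA0 : 0 ≤ A := Finset.sum_nonneg fun k _ => Finset.sum_nonneg fun l _ => hynn l k
  have hS0 : 0 ≤ S := Finset.sum_nonneg fun l _ => Finset.sum_nonneg fun k _ => hynn l k
  have hR0 : 0 ≤ R := Finset.sum_nonneg fun l _ => Finset.sum_nonneg fun k _ => hynn l k
  have hSR : S + R = 1 := by
    have h := Finset.sum_filter_add_sum_filter_not (Finset.range (T + 1)) (fun l => l ≤ t)
      (fun l => ∑ k ∈ Finset.range (T + 1), ystar l k)
    simp only [not_le] at h
    rw [hysum] at h
    exact h
  have hA1 : A ≤ 1 := by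
    have h := Finset.sum_le_sum_of_subset_of_nonneg
      (Finset.filter_subset (fun k => t < k) (Finset.range (T + 1)))
      (f := fun k => ∑ l ∈ Finset.range (T + 1), ystar l k)
      (fun k _ _ => Finset.sum_nonneg fun l _ => hynn l k)
    rw [Finset.sum_comm] at hysum
    rw [hysum] at h
    exact h
  have hD : (∑ k ∈ (Finset.range (T + 1)).filter (fun k => t < k),
      (mp0 * (∑ j ∈ Finset.range (T + 1), ystar k j)
        + mp1 * (∑ l ∈ Finset.range (T + 1), ystar l k)))
      = mp0 * R + mp1 * A := by
    rw [Finset.sum_add_distrib, ← Finset.mul_sum, ← Finset.mul_sum]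
  rw [hD]
  have hb1 : min m0p mp1 ≤ mp1 := min_le_right _ _
  have hb0 : 0 ≤ min m0p mp1 := le_min hm0p hmp1
  have hbc1 : min m0p mp1 + (mp0 - m0p) ≤ mp0 := by
    have := min_le_left m0p mp1; linarith
  have hbc0 : 0 ≤ min m0p mp1 + (mp0 - m0p) := by
    rcases le_total m0p mp1 with h | h
    · rw [min_eq_left h]; linarith
    · rw [min_eq_right h]; linarith
  have hC1 : min A S ≤ A := min_le_left _ _
  have hC0 : 0 ≤ min A S := le_min hA0 hS0
  have hCB1 : min A S + (R - A) ≤ R := by linarith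
  have hCB0 : 0 ≤ min A S + (R - A) := by
    rcases le_total A S with h | h
    · rw [min_eq_left h]; linarith
    · rw [min_eq_right h]; linarith
  have h1 : min m0p mp1 * min A S ≤ mp1 * A := mul_le_mul hb1 hC1 hC0 hmp1
  have h2 : (min m0p mp1 + (mp0 - m0p)) * (min A S + (R - A)) ≤ mp0 * R :=
    mul_le_mul hbc1 hCB1 hCB0 hmp0
  linarith
end

section
/- In the complete mediation setting, PCL_M ≤ PCU_M: max(0, cB) ≤ bC + (b+c)(C+B), where b = min(m_{0+}, m_{+1}), c = m_{+0} − m_{0+}, C = min(Σ_{k>t} y*_{+k}, Σ_{l≤t} y*_{l+}), B = Σ_{l>t} y*_{l+} − Σ_{k>t} y*_{+k}, given the probability constraints m_{0+}+m_{1+} = m_{+0}+m_{+1} = 1 with all marginals nonnegative, and the outcome marginals nonnegative summing to 1. -/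
/-- Consistency of the Theorem 2 mediation bounds: `PCL_M ≤ PCU_M`, i.e.
`max(0, cB) ≤ bC + (b+c)(C+B)` with `b = min(m_{0+}, m_{+1})`,
`c = m_{+0} − m_{0+}`, `C = min(Σ_{k>t} y*_{+k}, Σ_{l≤t} y*_{l+})`,
`B = Σ_{l>t} y*_{l+} − Σ_{k>t} y*_{+k}`. -/
theorem stmt16 (T t : ℕ) (m0p m1p mp0 mp1 : ℝ)
    (hm0p : 0 ≤ m0p) (hm1p : 0 ≤ m1p) (hmp0 : 0 ≤ mp0) (hmp1 : 0 ≤ mp1)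
    (hmr : m0p + m1p = 1) (hmc : mp0 + mp1 = 1)
    (ystar : ℕ → ℕ → ℝ) (hynn : ∀ l k, 0 ≤ ystar l k)
    (hysum : ∑ l ∈ Finset.range (T + 1), ∑ k ∈ Finset.range (T + 1), ystar l k = 1) :
    max 0 ((mp0 - m0p) *
        ((∑ l ∈ (Finset.range (T + 1)).filter (fun l => t < l),
            ∑ k ∈ Finset.range (T + 1), ystar l k)
          - (∑ k ∈ (Finset.range (T + 1)).filter (fun k => t < k),
            ∑ l ∈ Finset.range (T + 1), ystar l k)))
    ≤ min m0p mp1 *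
        min (∑ k ∈ (Finset.range (T + 1)).filter (fun k => t < k),
              ∑ l ∈ Finset.range (T + 1), ystar l k)
            (∑ l ∈ (Finset.range (T + 1)).filter (fun l => l ≤ t),
              ∑ k ∈ Finset.range (T + 1), ystar l k)
      + (min m0p mp1 + (mp0 - m0p)) *
        (min (∑ k ∈ (Finset.range (T + 1)).filter (fun k => t < k),
                ∑ l ∈ Finset.range (T + 1), ystar l k)
             (∑ l ∈ (Finset.range (T + 1)).filter (fun l => l ≤ t),
                ∑ k ∈ Finset.range (T + 1), ystar l k)
          + ((∑ l ∈ (Finset.range (T + 1)).filter (fun l => t < l),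
                ∑ k ∈ Finset.range (T + 1), ystar l k)
            - (∑ k ∈ (Finset.range (T + 1)).filter (fun k => t < k),
                ∑ l ∈ Finset.range (T + 1), ystar l k))) := by
  set A := ∑ l ∈ (Finset.range (T + 1)).filter (fun l => t < l),
      ∑ k ∈ Finset.range (T + 1), ystar l k with hAdef
  set D := ∑ k ∈ (Finset.range (T + 1)).filter (fun k => t < k),
      ∑ l ∈ Finset.range (T + 1), ystar l k with hDdef
  set R0 := ∑ l ∈ (Finset.range (T + 1)).filter (fun l => l ≤ t),
      ∑ k ∈ Finset.range (T + 1), ystar l k with hR0def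
  have hA0 : 0 ≤ A := Finset.sum_nonneg fun l _ =>
    Finset.sum_nonneg fun k _ => hynn l k
  have hD0 : 0 ≤ D := Finset.sum_nonneg fun k _ =>
    Finset.sum_nonneg fun l _ => hynn l k
  have hR00 : 0 ≤ R0 := Finset.sum_nonneg fun l _ =>
    Finset.sum_nonneg fun k _ => hynn l k
  have hAR : A + R0 = 1 := by
    rw [hAdef, hR0def]
    have := Finset.sum_filter_add_sum_filter_not (Finset.range (T + 1))
      (fun l => t < l) (fun l => ∑ k ∈ Finset.range (T + 1), ystar l k)
    simpa [not_lt, hysum] using this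
  have hD1 : D ≤ 1 := by
    have hswap : ∑ k ∈ Finset.range (T + 1), ∑ l ∈ Finset.range (T + 1), ystar l k = 1 := by
      rw [Finset.sum_comm]; exact hysum
    have h2 := Finset.sum_filter_add_sum_filter_not (Finset.range (T + 1))
      (fun k => t < k) (fun k => ∑ l ∈ Finset.range (T + 1), ystar l k)
    have hother : 0 ≤ ∑ k ∈ (Finset.range (T + 1)).filter (fun k => ¬ t < k),
        ∑ l ∈ Finset.range (T + 1), ystar l k :=
      Finset.sum_nonneg fun k _ => Finset.sum_nonneg fun l _ => hynn l k
    rw [hswap] at h2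
    linarith
  set b := min m0p mp1 with hbdef
  set c := mp0 - m0p with hcdef
  have hb0 : 0 ≤ b := le_min hm0p hmp1
  have hbc0 : 0 ≤ b + c := by
    rcases le_total m0p mp1 with h | h
    · rw [hbdef, min_eq_left h]; linarith
    · rw [hbdef, min_eq_right h]; linarith
  set C := min D R0 with hCdef
  have hC0 : 0 ≤ C := le_min hD0 hR00
  have hCB : 0 ≤ C + (A - D) := by
    rcases le_total D R0 with h | h
    · rw [hCdef, min_eq_left h]; linarith
    · rw [hCdef, min_eq_right h]; linarith
  have hnB : D - A ≤ C := le_min (by linarith) (by linarith)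
  apply max_le
  · nlinarith [mul_nonneg hb0 hC0, mul_nonneg hbc0 hCB]
  · nlinarith [mul_nonneg hbc0 hCB, mul_nonneg hb0 (by linarith : 0 ≤ C - (D - A))]
end

section
/- For the three-valued outcome case (T=2, t=1) in complete mediation, the probability of causation equals ((y*_{02}+y*_{12})·m_{01} + (y*_{20}+y*_{21})·m_{10}) / (y*_{+2}·m_{+1} + y*_{2+}·m_{+0}), where the denominator equals Pr(Y(1)=2) computed via the law of total probability through the mediator; i.e., y_{+2} = m_{+0}·y*_{2+} + m_{+1}·y*_{+2}. -/
open MeasureTheory ProbabilityTheory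

/-- Three-valued outcome (`T=2`, `t=1`) in complete mediation: with binary
potential mediators `M(0), M(1)` jointly independent of the potential
responses `Y*(0), Y*(1)` of the ordinal outcome `Y ∈ {0,1,2}`, and
`Y(d) = Y*(M(d))`, the denominator of the probability of causation satisfies
`Pr(Y(1)=2) = m_{+0}·y*_{2+} + m_{+1}·y*_{+2}` and
`PC = Pr(Y(0) ≤ 1 ∧ Y(1)=2)/Pr(Y(1)=2)
    = ((y*_{02}+y*_{12})·m_{01} + (y*_{20}+y*_{21})·m_{10}) / (y*_{+2}·m_{+1} + y*_{2+}·m_{+0})`. -/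
theorem stmt17 {Ω : Type*} [MeasurableSpace Ω] (μ : Measure Ω)
    [IsProbabilityMeasure μ]
    (M : Fin 2 → Ω → Fin 2) (Ystar : Fin 2 → Ω → Fin 3)
    (hM : ∀ d, Measurable (M d)) (hY : ∀ m, Measurable (Ystar m))
    (hind : IndepFun (fun ω => (M 0 ω, M 1 ω)) (fun ω => (Ystar 0 ω, Ystar 1 ω)) μ) :
    (μ {ω | Ystar (M 1 ω) ω = 2}).toReal
        = (μ {ω | M 1 ω = 0}).toReal * (μ {ω | Ystar 0 ω = 2}).toReal
          + (μ {ω | M 1 ω = 1}).toReal * (μ {ω | Ystar 1 ω = 2}).toReal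
    ∧ (μ {ω | Ystar (M 0 ω) ω ≤ 1 ∧ Ystar (M 1 ω) ω = 2}).toReal
          / (μ {ω | Ystar (M 1 ω) ω = 2}).toReal
        = (((μ {ω | Ystar 0 ω = 0 ∧ Ystar 1 ω = 2}).toReal
              + (μ {ω | Ystar 0 ω = 1 ∧ Ystar 1 ω = 2}).toReal)
              * (μ {ω | M 0 ω = 0 ∧ M 1 ω = 1}).toReal
            + ((μ {ω | Ystar 0 ω = 2 ∧ Ystar 1 ω = 0}).toReal
              + (μ {ω | Ystar 0 ω = 2 ∧ Ystar 1 ω = 1}).toReal)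
              * (μ {ω | M 0 ω = 1 ∧ M 1 ω = 0}).toReal)
          / ((μ {ω | Ystar 1 ω = 2}).toReal * (μ {ω | M 1 ω = 1}).toReal
            + (μ {ω | Ystar 0 ω = 2}).toReal * (μ {ω | M 1 ω = 0}).toReal) := by
  set f : Ω → Fin 2 × Fin 2 := fun ω => (M 0 ω, M 1 ω) with hf_def
  set g : Ω → Fin 3 × Fin 3 := fun ω => (Ystar 0 ω, Ystar 1 ω) with hg_def
  have key : ∀ (A : Set (Fin 2 × Fin 2)) (B : Set (Fin 3 × Fin 3)),
      μ (f ⁻¹' A ∩ g ⁻¹' B) = μ (f ⁻¹' A) * μ (g ⁻¹' B) := fun A B =>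
    hind.measure_inter_preimage_eq_mul A B (Set.toFinite A).measurableSet
      (Set.toFinite B).measurableSet
  have h2 : ∀ x : Fin 2, x = 0 ∨ x = 1 := by decide
  have h3 : ∀ y : Fin 3, y ≤ 1 ↔ (y = 0 ∨ y = 1) := by decide
  -- denominator decomposition
  have hS : {ω | Ystar (M 1 ω) ω = 2}
      = (f ⁻¹' {p | p.2 = 0} ∩ g ⁻¹' {q | q.1 = 2})
        ∪ (f ⁻¹' {p | p.2 = 1} ∩ g ⁻¹' {q | q.2 = 2}) := by
    ext ω
    rcases h2 (M 1 ω) with h | h <;>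
      simp [Set.mem_setOf_eq, h, f, g]
  have hSdisj : Disjoint (f ⁻¹' {p | p.2 = 0} ∩ g ⁻¹' {q | q.1 = 2})
      (f ⁻¹' {p | p.2 = 1} ∩ g ⁻¹' {q | q.2 = 2}) := by
    rw [Set.disjoint_left]
    rintro ω ⟨h1, -⟩ ⟨h2', -⟩
    simp only [Set.mem_preimage, Set.mem_setOf_eq, f] at h1 h2'
    rw [h1] at h2'; exact absurd h2' (by decide)
  have hmeas : ∀ (A : Set (Fin 2 × Fin 2)) (B : Set (Fin 3 × Fin 3)),
      MeasurableSet (f ⁻¹' A ∩ g ⁻¹' B) := fun A B =>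
    (((hM 0).prodMk (hM 1)) (Set.toFinite A).measurableSet).inter
      (((hY 0).prodMk (hY 1)) (Set.toFinite B).measurableSet)
  have hM0 : {ω | M 1 ω = 0} = f ⁻¹' {p | p.2 = 0} := rfl
  have hM1 : {ω | M 1 ω = 1} = f ⁻¹' {p | p.2 = 1} := rfl
  have hY02 : {ω | Ystar 0 ω = 2} = g ⁻¹' {q | q.1 = 2} := rfl
  have hY12 : {ω | Ystar 1 ω = 2} = g ⁻¹' {q | q.2 = 2} := rfl
  have hden : μ {ω | Ystar (M 1 ω) ω = 2}
      = μ {ω | M 1 ω = 0} * μ {ω | Ystar 0 ω = 2}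
        + μ {ω | M 1 ω = 1} * μ {ω | Ystar 1 ω = 2} := by
    rw [hS, measure_union hSdisj (hmeas _ _), key, key, hM0, hM1, hY02, hY12]
  have part1 : (μ {ω | Ystar (M 1 ω) ω = 2}).toReal
      = (μ {ω | M 1 ω = 0}).toReal * (μ {ω | Ystar 0 ω = 2}).toReal
        + (μ {ω | M 1 ω = 1}).toReal * (μ {ω | Ystar 1 ω = 2}).toReal := by
    rw [hden, ENNReal.toReal_add (by finiteness) (by finiteness),
      ENNReal.toReal_mul, ENNReal.toReal_mul]
  refine ⟨part1, ?_⟩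
  -- numerator decomposition
  have hN : {ω | Ystar (M 0 ω) ω ≤ 1 ∧ Ystar (M 1 ω) ω = 2}
      = (f ⁻¹' {p | p.1 = 0 ∧ p.2 = 1} ∩ g ⁻¹' {q | q.1 ≤ 1 ∧ q.2 = 2})
        ∪ (f ⁻¹' {p | p.1 = 1 ∧ p.2 = 0} ∩ g ⁻¹' {q | q.2 ≤ 1 ∧ q.1 = 2}) := by
    ext ω
    rcases h2 (M 0 ω) with h0 | h0 <;> rcases h2 (M 1 ω) with h1 | h1 <;>
      simp [Set.mem_setOf_eq, h0, h1, f, g] <;>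
      · intro h h'; rw [h'] at h; exact absurd h (by decide)
  have hNdisj : Disjoint (f ⁻¹' {p | p.1 = 0 ∧ p.2 = 1} ∩ g ⁻¹' {q | q.1 ≤ 1 ∧ q.2 = 2})
      (f ⁻¹' {p | p.1 = 1 ∧ p.2 = 0} ∩ g ⁻¹' {q | q.2 ≤ 1 ∧ q.1 = 2}) := by
    rw [Set.disjoint_left]
    rintro ω ⟨h1, -⟩ ⟨h2', -⟩
    simp only [Set.mem_preimage, Set.mem_setOf_eq, f] at h1 h2'
    rw [h1.1] at h2'; exact absurd h2'.1 (by decide)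
  -- split the g-events
  have hB01 : μ (g ⁻¹' {q | q.1 ≤ 1 ∧ q.2 = 2})
      = μ {ω | Ystar 0 ω = 0 ∧ Ystar 1 ω = 2} + μ {ω | Ystar 0 ω = 1 ∧ Ystar 1 ω = 2} := by
    have hset : ({q : Fin 3 × Fin 3 | q.1 ≤ 1 ∧ q.2 = 2})
        = {q | q.1 = 0 ∧ q.2 = 2} ∪ {q | q.1 = 1 ∧ q.2 = 2} := by
      have : ∀ q : Fin 3 × Fin 3, (q.1 ≤ 1 ∧ q.2 = 2)
          ↔ ((q.1 = 0 ∧ q.2 = 2) ∨ (q.1 = 1 ∧ q.2 = 2)) := by decide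
      ext q
      simpa [Set.mem_setOf_eq] using this q
    have : (g ⁻¹' {q | q.1 ≤ 1 ∧ q.2 = 2})
        = (g ⁻¹' {q | q.1 = 0 ∧ q.2 = 2}) ∪ (g ⁻¹' {q | q.1 = 1 ∧ q.2 = 2}) := by
      rw [hset, Set.preimage_union]
    rw [this, measure_union ?_ (((hY 0).prodMk (hY 1)) (Set.toFinite _).measurableSet)]
    · rfl
    · rw [Set.disjoint_left]
      rintro ω ⟨h1, -⟩ ⟨h2', -⟩
      simp only [Set.mem_preimage, Set.mem_setOf_eq, g] at h1 h2'
      rw [h1] at h2'; exact absurd h2' (by decide)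
  have hB10 : μ (g ⁻¹' {q | q.2 ≤ 1 ∧ q.1 = 2})
      = μ {ω | Ystar 0 ω = 2 ∧ Ystar 1 ω = 0} + μ {ω | Ystar 0 ω = 2 ∧ Ystar 1 ω = 1} := by
    have hset : ({q : Fin 3 × Fin 3 | q.2 ≤ 1 ∧ q.1 = 2})
        = {q | q.1 = 2 ∧ q.2 = 0} ∪ {q | q.1 = 2 ∧ q.2 = 1} := by
      have : ∀ q : Fin 3 × Fin 3, (q.2 ≤ 1 ∧ q.1 = 2)
          ↔ ((q.1 = 2 ∧ q.2 = 0) ∨ (q.1 = 2 ∧ q.2 = 1)) := by decide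
      ext q
      simpa [Set.mem_setOf_eq] using this q
    have : (g ⁻¹' {q | q.2 ≤ 1 ∧ q.1 = 2})
        = (g ⁻¹' {q | q.1 = 2 ∧ q.2 = 0}) ∪ (g ⁻¹' {q | q.1 = 2 ∧ q.2 = 1}) := by
      rw [hset, Set.preimage_union]
    rw [this, measure_union ?_ (((hY 0).prodMk (hY 1)) (Set.toFinite _).measurableSet)]
    · rfl
    · rw [Set.disjoint_left]
      rintro ω ⟨-, h1⟩ ⟨-, h2'⟩
      simp only [Set.mem_preimage, Set.mem_setOf_eq, g] at h1 h2'
      rw [h1] at h2'; exact absurd h2' (by decide)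
  have hm01 : f ⁻¹' {p | p.1 = 0 ∧ p.2 = 1} = {ω | M 0 ω = 0 ∧ M 1 ω = 1} := rfl
  have hm10 : f ⁻¹' {p | p.1 = 1 ∧ p.2 = 0} = {ω | M 0 ω = 1 ∧ M 1 ω = 0} := rfl
  have hnum : μ {ω | Ystar (M 0 ω) ω ≤ 1 ∧ Ystar (M 1 ω) ω = 2}
      = (μ {ω | Ystar 0 ω = 0 ∧ Ystar 1 ω = 2} + μ {ω | Ystar 0 ω = 1 ∧ Ystar 1 ω = 2})
          * μ {ω | M 0 ω = 0 ∧ M 1 ω = 1}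
        + (μ {ω | Ystar 0 ω = 2 ∧ Ystar 1 ω = 0} + μ {ω | Ystar 0 ω = 2 ∧ Ystar 1 ω = 1})
          * μ {ω | M 0 ω = 1 ∧ M 1 ω = 0} := by
    rw [hN, measure_union hNdisj (hmeas _ _), key, key, hB01, hB10, hm01, hm10,
      mul_comm (μ {ω | M 0 ω = 0 ∧ M 1 ω = 1}), mul_comm (μ {ω | M 0 ω = 1 ∧ M 1 ω = 0})]
  have hnumR : (μ {ω | Ystar (M 0 ω) ω ≤ 1 ∧ Ystar (M 1 ω) ω = 2}).toReal
      = ((μ {ω | Ystar 0 ω = 0 ∧ Ystar 1 ω = 2}).toReal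
          + (μ {ω | Ystar 0 ω = 1 ∧ Ystar 1 ω = 2}).toReal)
          * (μ {ω | M 0 ω = 0 ∧ M 1 ω = 1}).toReal
        + ((μ {ω | Ystar 0 ω = 2 ∧ Ystar 1 ω = 0}).toReal
          + (μ {ω | Ystar 0 ω = 2 ∧ Ystar 1 ω = 1}).toReal)
          * (μ {ω | M 0 ω = 1 ∧ M 1 ω = 0}).toReal := by
    rw [hnum, ENNReal.toReal_add (by finiteness) (by finiteness), ENNReal.toReal_mul,
      ENNReal.toReal_mul, ENNReal.toReal_add (by finiteness) (by finiteness),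
      ENNReal.toReal_add (by finiteness) (by finiteness)]
  rw [hnumR, part1]
  ring_nf
end
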